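/- arXiv:2107.02591 — 2 statements merged into one kernel-verified Lean document; each statement's English description precedes it below -/
import Mathlib

section
/- Bounded origin distance implies bounded delay for synchronized word productions: let ℓ, i ≥ 1 and let u be a word of length n, v a word of length m, and o1, o2 : {1,…,m} → {1,…,n} two monotone nondecreasing origin maps such that (a) for each input position p, at most ℓ output positions d satisfy o1(d) = p, and (b) |o1(d) − o2(d)| ≤ i for all d. Then for every input prefix length p ∈ {0,…,n}, the numbers k1 = |{d : o1(d) ≤ p}| and k2 = |{d : o2(d) ≤ p}| satisfy |k1 − k2| ≤ ℓ·i. -/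
/-!
Write `A₁`, `A₂` for the output positions whose origin in the first, resp. second, run lies in
the prefix `[0, p)`. A position in `A₂ \ A₁` has its first origin in the window `[p, p + i)`,
and one in `A₁ \ A₂` in the window `[p - i, p)`, since the two origins differ by at most `i`.
Each window consists of `i` input positions, each the first origin of at most `ℓ` outputs,
so both differences have at most `ℓ·i` elements, and so does `|#A₁ - #A₂|`.
-/

open Finset

theorem Finset.abs_card_sub_card_le {α : Type*} [DecidableEq α] {s t : Finset α} {k : ℕ}
    (hst : #(s \ t) ≤ k) (hts : #(t \ s) ≤ k) : |(#s : ℤ) - #t| ≤ k := by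
  have hs := card_sdiff_add_card_inter s t
  have ht := card_sdiff_add_card_inter t s
  rw [inter_comm] at ht
  rw [abs_le]
  constructor <;> omega

theorem Finset.card_filter_mem_Ico_le_mul {ι : Type*} (s : Finset ι) (f : ι → ℕ) {ℓ : ℕ}
    (hf : ∀ q, #{x ∈ s | f x = q} ≤ ℓ) (a b : ℕ) :
    #{x ∈ s | f x ∈ Ico a (a + b)} ≤ ℓ * b := by
  simpa using card_le_mul_card_image_of_maps_to (s := {x ∈ s | f x ∈ Ico a (a + b)})
    (fun x hx => (mem_filter.1 hx).2) ℓ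
    fun q _ => (card_le_card (filter_subset_filter _ (filter_subset _ s))).trans (hf q)

theorem bounded_origin_distance_implies_bounded_delay_general
    (ℓ i n m : ℕ)
    (o1 o2 : Fin m → Fin n)
    (hcap : ∀ p : Fin n, (Finset.univ.filter fun d : Fin m => o1 d = p).card ≤ ℓ)
    (hclose : ∀ d : Fin m, |((o1 d : ℕ) : ℤ) - ((o2 d : ℕ) : ℤ)| ≤ (i : ℤ))
    (p : ℕ) :
    |(((Finset.univ.filter fun d : Fin m => (o1 d : ℕ) < p).card : ℤ) -
      ((Finset.univ.filter fun d : Fin m => (o2 d : ℕ) < p).card : ℤ))| ≤ (ℓ * i : ℤ) := by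
  have hfiber (q : ℕ) : #{d | (o1 d : ℕ) = q} ≤ ℓ := by
    by_cases hq : q < n
    · simpa [Fin.ext_iff] using hcap ⟨q, hq⟩
    · have hne (d : Fin m) : (o1 d : ℕ) ≠ q := fun hd => hq (hd ▸ (o1 d).isLt)
      simp [hne]
  have hwindow (a : ℕ) := card_filter_mem_Ico_le_mul univ (fun d => (o1 d : ℕ)) hfiber a i
  have hdist (d : Fin m) := abs_le.1 (hclose d)
  rw [← Nat.cast_mul]
  apply abs_card_sub_card_le
  · refine (card_le_card fun d hd => ?_).trans (hwindow (p - i))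
    simp only [mem_sdiff, mem_filter, mem_univ, true_and, not_lt, mem_Ico] at hd ⊢
    have := hdist d
    omega
  · refine (card_le_card fun d hd => ?_).trans (hwindow p)
    simp only [mem_sdiff, mem_filter, mem_univ, true_and, not_lt, mem_Ico] at hd ⊢
    have := hdist d
    omega

/-- Bounded origin distance implies bounded delay for synchronized word productions:
given monotone origin maps `o1 o2 : {1,…,m} → {1,…,n}` (0-indexed here: `Fin m → Fin n`)
such that at most `ℓ` output positions have the same `o1`-origin and `|o1 d − o2 d| ≤ i`
for all `d`, then for every input prefix length `p ≤ n` the amounts `k1`, `k2` of output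
produced on that prefix in the two runs satisfy `|k1 − k2| ≤ ℓ·i`. -/
theorem bounded_origin_distance_implies_bounded_delay
    (ℓ i n m : ℕ) (hℓ : 1 ≤ ℓ) (hi : 1 ≤ i)
    (o1 o2 : Fin m → Fin n)
    (hmono1 : Monotone o1) (hmono2 : Monotone o2)
    (hcap : ∀ p : Fin n, (Finset.univ.filter fun d : Fin m => o1 d = p).card ≤ ℓ)
    (hclose : ∀ d : Fin m, |((o1 d : ℕ) : ℤ) - ((o2 d : ℕ) : ℤ)| ≤ (i : ℤ))
    (p : ℕ) (hp : p ≤ n) :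
    |(((Finset.univ.filter fun d : Fin m => (o1 d : ℕ) < p).card : ℤ) -
      ((Finset.univ.filter fun d : Fin m => (o2 d : ℕ) < p).card : ℤ))| ≤ (ℓ * i : ℤ) :=
  bounded_origin_distance_implies_bounded_delay_general ℓ i n m o1 o2 hcap hclose p
end

section
/- Runs of linear top-down tree transducers have length bounded by the input size: if T is a linear TDTT and (t, q0, φ0) →^n (t, t', φ) is any run of T on input tree t, then n ≤ |dom(t)|; moreover, along such a run, every node of t is the φ-image of at most one Q-labeled leaf in each configuration. -/
/-- A partial tree over a ranked alphabet `S`, represented by its (partial) labeling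
function: `t u = some a` means node `u` is in the domain and labeled `a`. -/
abbrev PTree (S : Type) := List ℕ → Option S

/-- The (tree) domain of a partial tree. -/
def treeDom {S : Type} (t : PTree S) : Set (List ℕ) := {u | t u ≠ none}

/-- `t` is a partial tree over the ranked alphabet `(S, rk)`: its domain is a finite
nonempty prefix-closed left-closed set of words over `ℕ \ {0}`, and every node has
at most `rk (label)` successors. -/
structure IsPTree {S : Type} (rk : S → ℕ) (t : PTree S) : Prop where
  finite : (treeDom t).Finite
  root : t [] ≠ none
  pos : ∀ u ∈ treeDom t, ∀ i ∈ u, 0 < i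
  prefixClosed : ∀ u v : List ℕ, u <+: v → v ∈ treeDom t → u ∈ treeDom t
  leftClosed : ∀ (u : List ℕ) (i j : ℕ), u ++ [i] ∈ treeDom t → 1 ≤ j → j < i →
    u ++ [j] ∈ treeDom t
  rankBound : ∀ (u : List ℕ) (a : S), t u = some a → ∀ i : ℕ, u ++ [i] ∈ treeDom t → i ≤ rk a

/-- The prefix relation `t' ⊑ t` on partial trees: `dom t' ⊆ dom t` and the labels
agree on `dom t'`. -/
def ple {S : Type} (t' t : PTree S) : Prop := ∀ (u : List ℕ) (a : S), t' u = some a → t u = some a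

/-- A top-down tree transducer `T = (Q, Σ, Γ, q0, Δ)`.  A rule for state `q` and input
symbol `f` has as right-hand side a tree over `Γ ∪ (Q × ℕ)`, where a leaf `(q', j)`
stands for `q'(x_j)` (state `q'` sent to the `j`-th child of the current input node). -/
structure TDTT (Q S Γ : Type) where
  q0 : Q
  rules : Q → S → Set (PTree (Γ ⊕ (Q × ℕ)))

/-- A configuration of a top-down tree transducer on a fixed input tree: an output tree
over `Γ ∪ Q` together with a map `φ` sending each `Q`-labeled leaf of the output tree to
the input node from which the transducer continues to read. -/
structure Config (Q Γ : Type) where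
  out : PTree (Γ ⊕ Q)
  φ : List ℕ → Option (List ℕ)

/-- The initial configuration `(t, q0, φ0)` (output is the single state-labeled node
`q0`, mapped to the root of the input tree). -/
def initConfig {Q S Γ : Type} (T : TDTT Q S Γ) : Config Q Γ where
  out := fun w => if w = [] then some (Sum.inr T.q0) else none
  φ := fun w => if w = [] then some ([] : List ℕ) else none

/-- The successor relation on configurations: one rule of `T` is applied at a
state-labeled leaf `u` of the output tree, mapped by `φ` to input node `v`; the leaf is
replaced by the rule's right-hand side and `φ` sends the new state-labeled leaves
`(q', j)` to the corresponding children `v ++ [j]` of `v`. -/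
def Step {Q S Γ : Type} (T : TDTT Q S Γ) (t : PTree S) (c c' : Config Q Γ) : Prop :=
  ∃ (u v : List ℕ) (q : Q) (f : S) (rhs : PTree (Γ ⊕ (Q × ℕ))),
    c.out u = some (Sum.inr q) ∧ c.φ u = some v ∧ t v = some f ∧ rhs ∈ T.rules q f ∧
    (∀ w : List ℕ, c'.out w =
      if u <+: w then (rhs (w.drop u.length)).map (Sum.map id Prod.fst) else c.out w) ∧
    (∀ w : List ℕ, c'.φ w =
      if u <+: w then
        (match rhs (w.drop u.length) with
          | some (Sum.inr p) => some (v ++ [p.2])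
          | _ => none)
      else c.φ w)

/-- A configuration is final if it has no successor configuration. -/
def Final {Q S Γ : Type} (T : TDTT Q S Γ) (t : PTree S) (c : Config Q Γ) : Prop :=
  ¬ ∃ c' : Config Q Γ, Step T t c c'

/-- `T(t)`: the set of final transformed outputs of computations of `T` on `t`
(trees over `Γ ∪ Q`). -/
def outputs {Q S Γ : Type} (T : TDTT Q S Γ) (t : PTree S) : Set (PTree (Γ ⊕ Q)) :=
  {s | ∃ c : Config Q Γ, Relation.ReflTransGen (Step T t) (initConfig T) c ∧
    Final T t c ∧ c.out = s}

/-- `T` is linear: in every rule the variables `x_{j1}, …, x_{jn}` occurring on the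
right-hand side are pairwise distinct. -/
def Linear {Q S Γ : Type} (T : TDTT Q S Γ) : Prop :=
  ∀ (q : Q) (f : S) (rhs : PTree (Γ ⊕ (Q × ℕ))), rhs ∈ T.rules q f →
    ∀ (u1 u2 : List ℕ) (p1 p2 : Q × ℕ),
      rhs u1 = some (Sum.inr p1) → rhs u2 = some (Sum.inr p2) → p1.2 = p2.2 → u1 = u2

/-!
The φ-images of the state-labeled leaves of a configuration form an antichain for the prefix
order, and distinct leaves have distinct images; a step replaces the leaf reading `v` by leaves
reading distinct children of `v` (linearity), which keeps this invariant. Hence the set of input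
nodes lying below some φ-image loses at least the node `v` at every step, so a run has at most
`|dom t|` steps.
-/

namespace Config

variable {Q Γ : Type}

def Reads (c : Config Q Γ) (w x : List ℕ) : Prop :=
  (∃ q, c.out w = some (Sum.inr q)) ∧ c.φ w = some x

def PrefixFree (c : Config Q Γ) : Prop :=
  ∀ ⦃w1 w2 x1 x2⦄, c.Reads w1 x1 → c.Reads w2 x2 → x1 <+: x2 → w1 = w2

def pending (D : Set (List ℕ)) (c : Config Q Γ) : Set (List ℕ) :=
  {x ∈ D | ∃ w y, c.Reads w y ∧ y <+: x}

structure Replaces (c c' : Config Q Γ) (u v : List ℕ) : Prop where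
  reads : c.Reads u v
  old : ∀ ⦃w x⦄, c'.Reads w x → ¬ u <+: w → c.Reads w x
  new : ∀ ⦃w x⦄, c'.Reads w x → u <+: w → ∃ j, x = v ++ [j]
  new_inj : ∀ ⦃w1 w2 x⦄, c'.Reads w1 x → c'.Reads w2 x → u <+: w1 → u <+: w2 → w1 = w2

namespace Replaces

variable {c c' : Config Q Γ} {u v : List ℕ}

theorem prefixFree (h : c.Replaces c' u v) (hc : c.PrefixFree) : c'.PrefixFree := by
  intro w1 w2 x1 x2 h1 h2 hx
  have incomparable : ∀ ⦃w x⦄, c.Reads w x → ¬ u <+: w → ¬ (x <+: v ∨ v <+: x) := by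
    rintro w x hw hnu (hxv | hvx)
    · exact hnu (hc hw h.reads hxv ▸ List.prefix_rfl)
    · exact hnu (hc h.reads hw hvx ▸ List.prefix_rfl)
  by_cases hu1 : u <+: w1 <;> by_cases hu2 : u <+: w2
  · obtain ⟨j1, rfl⟩ := h.new h1 hu1
    obtain ⟨j2, rfl⟩ := h.new h2 hu2
    exact h.new_inj h1 (hx.eq_of_length (by simp) ▸ h2) hu1 hu2
  · obtain ⟨j, rfl⟩ := h.new h1 hu1
    exact absurd (Or.inr ((List.prefix_append v [j]).trans hx)) (incomparable (h.old h2 hu2) hu2)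
  · obtain ⟨j, rfl⟩ := h.new h2 hu2
    refine absurd ?_ (incomparable (h.old h1 hu1) hu1)
    rcases List.prefix_concat_iff.mp hx with rfl | hxv
    · exact Or.inr (List.prefix_append v [j])
    · exact Or.inl hxv
  · exact hc (h.old h1 hu1) (h.old h2 hu2) hx

theorem pending_ssubset {D : Set (List ℕ)} (h : c.Replaces c' u v) (hc : c.PrefixFree)
    (hv : v ∈ D) : pending D c' ⊂ pending D c := by
  refine Set.ssubset_iff_of_subset ?_ |>.mpr ⟨v, ⟨hv, u, v, h.reads, List.prefix_rfl⟩, ?_⟩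
  · rintro x ⟨hxD, w, y, hw, hyx⟩
    refine ⟨hxD, ?_⟩
    by_cases huw : u <+: w
    · obtain ⟨j, rfl⟩ := h.new hw huw
      exact ⟨u, v, h.reads, (List.prefix_append v [j]).trans hyx⟩
    · exact ⟨w, y, h.old hw huw, hyx⟩
  · rintro ⟨-, w, y, hw, hyv⟩
    by_cases huw : u <+: w
    · obtain ⟨j, rfl⟩ := h.new hw huw
      simpa using hyv.length_le
    · exact huw (hc (h.old hw huw) h.reads hyv ▸ List.prefix_rfl)

end Replaces

end Config

open Config

section

variable {Q S Γ : Type}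

theorem initConfig_prefixFree (T : TDTT Q S Γ) : (initConfig T).PrefixFree := by
  rintro w1 w2 _ _ ⟨-, h1⟩ ⟨-, h2⟩ -
  simp only [initConfig] at h1 h2
  split_ifs at h1 h2 with e1 e2
  exact e1.trans e2.symm

theorem Step.exists_replaces {T : TDTT Q S Γ} {t : PTree S} {c c' : Config Q Γ}
    (hlin : Linear T) (h : Step T t c c') :
    ∃ u v, v ∈ treeDom t ∧ c.Replaces c' u v := by
  obtain ⟨u, v, q, f, rhs, hu, hφu, htv, hrhs, hout, hφ⟩ := h
  have new : ∀ ⦃w x⦄, c'.Reads w x → u <+: w →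
      ∃ d p, w = u ++ d ∧ rhs d = some (Sum.inr p) ∧ x = v ++ [p.2] := by
    rintro w x ⟨-, hx⟩ ⟨d, rfl⟩
    rw [hφ, if_pos (List.prefix_append u d), List.drop_left] at hx
    rcases hd : rhs d with _ | _ | p <;>
      simp only [hd, reduceCtorEq, Option.some.injEq] at hx
    exact ⟨d, p, rfl, hd, hx.symm⟩
  refine ⟨u, v, by simp [treeDom, htv], ⟨⟨q, hu⟩, hφu⟩, ?_, ?_, ?_⟩
  · rintro w x ⟨⟨q', hw⟩, hx⟩ huw
    rw [hout, if_neg huw] at hw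
    rw [hφ, if_neg huw] at hx
    exact ⟨⟨q', hw⟩, hx⟩
  · intro w x hw huw
    obtain ⟨d, p, -, -, rfl⟩ := new hw huw
    exact ⟨p.2, rfl⟩
  · intro w1 w2 x h1 h2 hu1 hu2
    obtain ⟨d1, p1, rfl, hd1, rfl⟩ := new h1 hu1
    obtain ⟨d2, p2, rfl, hd2, hx⟩ := new h2 hu2
    rw [hlin q f rhs hrhs d1 d2 p1 p2 hd1 hd2 (by simpa using hx)]

variable {T : TDTT Q S Γ} {t : PTree S} {n : ℕ} {c : ℕ → Config Q Γ}

theorem prefixFree_of_run (hlin : Linear T) (h0 : c 0 = initConfig T)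
    (hstep : ∀ i, i < n → Step T t (c i) (c (i + 1))) :
    ∀ i, i ≤ n → (c i).PrefixFree := by
  intro i
  induction i with
  | zero => exact fun _ => h0 ▸ initConfig_prefixFree T
  | succ i ih =>
    intro hi
    obtain ⟨u, v, -, h⟩ := (hstep i hi).exists_replaces hlin
    exact h.prefixFree (ih (Nat.le_of_succ_le hi))

theorem ncard_pending_add_le_of_run (hlin : Linear T) (ht : (treeDom t).Finite)
    (h0 : c 0 = initConfig T) (hstep : ∀ i, i < n → Step T t (c i) (c (i + 1))) :
    ∀ i, i ≤ n → (pending (treeDom t) (c i)).ncard + i ≤ (treeDom t).ncard := by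
  intro i
  induction i with
  | zero => exact fun _ => Set.ncard_le_ncard (Set.sep_subset _ _) ht
  | succ i ih =>
    intro hi
    obtain ⟨u, v, hv, h⟩ := (hstep i hi).exists_replaces hlin
    have hc := prefixFree_of_run hlin h0 hstep i (Nat.le_of_succ_le hi)
    have hlt := Set.ncard_lt_ncard (h.pending_ssubset hc hv) (ht.subset (Set.sep_subset _ _))
    have := ih (Nat.le_of_succ_le hi)
    omega

end

/-- Runs of linear top-down tree transducers have length bounded by the input size:
any run `(t, q0, φ0) →ⁿ (t, t', φ)` of a linear TDTT `T` on input `t` satisfies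
`n ≤ |dom t|`; moreover, along such a run, every node of `t` is the `φ`-image of at
most one `Q`-labeled leaf in each configuration. -/
theorem linear_run_length_bounded {Q S Γ : Type} (rkS : S → ℕ)
    (T : TDTT Q S Γ) (hlin : Linear T)
    (t : PTree S) (ht : IsPTree rkS t)
    (n : ℕ) (c : ℕ → Config Q Γ)
    (h0 : c 0 = initConfig T) (hstep : ∀ i, i < n → Step T t (c i) (c (i + 1))) :
    n ≤ (treeDom t).ncard ∧
    ∀ i, i ≤ n → ∀ (w1 w2 v : List ℕ) (q1 q2 : Q),
      (c i).out w1 = some (Sum.inr q1) → (c i).out w2 = some (Sum.inr q2) →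
      (c i).φ w1 = some v → (c i).φ w2 = some v → w1 = w2 := by
  refine ⟨?_, fun i hi w1 w2 v q1 q2 ho1 ho2 hφ1 hφ2 => ?_⟩
  · have := ncard_pending_add_le_of_run hlin ht.finite h0 hstep n le_rfl
    omega
  · exact prefixFree_of_run hlin h0 hstep i hi ⟨⟨q1, ho1⟩, hφ1⟩ ⟨⟨q2, ho2⟩, hφ2⟩
      List.prefix_rfl
end
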